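/- arXiv:1609.07546 — 2 statements merged into one kernel-verified Lean document; each statement's English description precedes it below -/
import Mathlib

section
/- Branching bisimilarity ≈, defined as the union of all branching bisimulations, is an equivalence relation on the states of a labeled transition system. -/
/-- A finite (possibly empty) sequence of τ-transitions. -/
def TauSeq {S A : Type*} (tr : S → A → S → Prop) (τ : A) : S → S → Prop :=
  Relation.ReflTransGen (fun s s' => tr s τ s')

/-- `R` is a branching bisimulation on the LTS with transition relation `tr`
and silent action `τ`. -/
def IsBranchingBisim {S A : Type*} (tr : S → A → S → Prop) (τ : A)
    (R : S → S → Prop) : Prop :=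
  (∀ s t, R s t → R t s) ∧
  ∀ s1 s2, R s1 s2 →
    (∀ a s1', tr s1 a s1' → a ≠ τ →
      ∃ l s2', TauSeq tr τ s2 l ∧ tr l a s2' ∧ R s1 l ∧ R s1' s2') ∧
    (∀ s1', tr s1 τ s1' →
      R s1' s2 ∨ ∃ l s2', TauSeq tr τ s2 l ∧ tr l τ s2' ∧ R s1 l ∧ R s1' s2')

/-- Branching bisimilarity: the union of all branching bisimulations. -/
def BBisim {S A : Type*} (tr : S → A → S → Prop) (τ : A) (s t : S) : Prop :=
  ∃ R, IsBranchingBisim tr τ R ∧ R s t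

section Aux
variable {S A : Type*} (tr : S → A → S → Prop) (τ : A)

/-- Semi-branching bisimulation (Basten). -/
def IsSemiBB (R : S → S → Prop) : Prop :=
  (∀ s t, R s t → R t s) ∧
  ∀ s1 s2, R s1 s2 →
    (∀ a s1', tr s1 a s1' → a ≠ τ →
      ∃ l s2', TauSeq tr τ s2 l ∧ tr l a s2' ∧ R s1 l ∧ R s1' s2') ∧
    (∀ s1', tr s1 τ s1' →
      (∃ l, TauSeq tr τ s2 l ∧ R s1 l ∧ R s1' l) ∨
      ∃ l s2', TauSeq tr τ s2 l ∧ tr l τ s2' ∧ R s1 l ∧ R s1' s2')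

/-- Union of all semi-branching bisimulations. -/
def SB (s t : S) : Prop := ∃ R, IsSemiBB tr τ R ∧ R s t

variable {tr} {τ}

theorem bb_to_sbb {R : S → S → Prop} (h : IsBranchingBisim tr τ R) : IsSemiBB tr τ R := by
  obtain ⟨hsym, h⟩ := h
  refine ⟨hsym, fun s1 s2 hR => ⟨(h s1 s2 hR).1, fun s1' hs => ?_⟩⟩
  rcases (h s1 s2 hR).2 s1' hs with h' | ⟨l, s2', hseq, hstep, h1, h2⟩
  · exact Or.inl ⟨s2, Relation.ReflTransGen.refl, hR, h'⟩
  · exact Or.inr ⟨l, s2', hseq, hstep, h1, h2⟩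

theorem sbb_SB : IsSemiBB tr τ (SB tr τ) := by
  constructor
  · rintro s t ⟨R, hR, h⟩; exact ⟨R, hR, hR.1 s t h⟩
  · rintro s1 s2 ⟨R, hR, h⟩
    constructor
    · intro a s1' hs ha
      obtain ⟨l, s2', h1, h2, h3, h4⟩ := ((hR.2 s1 s2 h).1) a s1' hs ha
      exact ⟨l, s2', h1, h2, ⟨R, hR, h3⟩, ⟨R, hR, h4⟩⟩
    · intro s1' hs
      rcases (hR.2 s1 s2 h).2 s1' hs with ⟨l, h1, h2, h3⟩ | ⟨l, s2', h1, h2, h3, h4⟩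
      · exact Or.inl ⟨l, h1, ⟨R, hR, h2⟩, ⟨R, hR, h3⟩⟩
      · exact Or.inr ⟨l, s2', h1, h2, ⟨R, hR, h3⟩, ⟨R, hR, h4⟩⟩

theorem SB_symm {s t : S} (h : SB tr τ s t) : SB tr τ t s := sbb_SB.1 s t h

/-- τ-sequence simulation for a semi-branching bisimulation. -/
theorem sbb_tauseq {R : S → S → Prop} (hR : IsSemiBB tr τ R) {s s' t : S}
    (h : R s t) (hseq : TauSeq tr τ s s') : ∃ t', TauSeq tr τ t t' ∧ R s' t' := by
  induction hseq with
  | refl => exact ⟨t, Relation.ReflTransGen.refl, h⟩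
  | tail hab hbc ih =>
    obtain ⟨t', ht', hrel⟩ := ih
    rcases (hR.2 _ t' hrel).2 _ hbc with ⟨l, h1, _, h3⟩ | ⟨l, t2, h1, h2, _, h4⟩
    · exact ⟨l, ht'.trans h1, h3⟩
    · exact ⟨t2, (ht'.trans h1).tail h2, h4⟩

/-- SB is transitive. -/
theorem SB_trans {s t u : S} (h1 : SB tr τ s t) (h2 : SB tr τ t u) : SB tr τ s u := by
  refine ⟨fun x z => ∃ y, SB tr τ x y ∧ SB tr τ y z, ⟨?_, ?_⟩, t, h1, h2⟩
  · rintro x z ⟨y, hxy, hyz⟩; exact ⟨y, SB_symm hyz, SB_symm hxy⟩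
  · rintro s1 s3 ⟨s2, h12, h23⟩
    constructor
    · intro a s1' hs ha
      obtain ⟨l, s2', hseq, hstep, hr1, hr2⟩ := ((sbb_SB.2 s1 s2 h12).1) a s1' hs ha
      obtain ⟨m, hmseq, hlm⟩ := sbb_tauseq sbb_SB h23 hseq
      obtain ⟨l3, s3', hseq3, hstep3, hr3, hr4⟩ := ((sbb_SB.2 l m hlm).1) a s2' hstep ha
      exact ⟨l3, s3', hmseq.trans hseq3, hstep3, ⟨l, hr1, hr3⟩, ⟨s2', hr2, hr4⟩⟩
    · intro s1' hs
      rcases (sbb_SB.2 s1 s2 h12).2 s1' hs with ⟨l, hseq, hr1, hr2⟩ | ⟨l, s2', hseq, hstep, hr1, hr2⟩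
      · obtain ⟨m, hmseq, hlm⟩ := sbb_tauseq sbb_SB h23 hseq
        exact Or.inl ⟨m, hmseq, ⟨l, hr1, hlm⟩, ⟨l, hr2, hlm⟩⟩
      · obtain ⟨m, hmseq, hlm⟩ := sbb_tauseq sbb_SB h23 hseq
        rcases (sbb_SB.2 l m hlm).2 s2' hstep with ⟨m', hm', hr3, hr4⟩ | ⟨m1, m2, hm1, hstep2, hr3, hr4⟩
        · exact Or.inl ⟨m', hmseq.trans hm', ⟨l, hr1, hr3⟩, ⟨s2', hr2, hr4⟩⟩
        · exact Or.inr ⟨m1, m2, hmseq.trans hm1, hstep2, ⟨l, hr1, hr3⟩, ⟨s2', hr2, hr4⟩⟩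

/-- The stuttering pairs. -/
def Dstut (x y : S) : Prop :=
  ∃ t u, SB tr τ x t ∧ SB tr τ x u ∧ TauSeq tr τ t y ∧ TauSeq tr τ y u

/-- SB together with the stuttering pairs is a semi-branching bisimulation. -/
theorem stutter_sbb :
    IsSemiBB tr τ (fun x y => SB tr τ x y ∨ Dstut (tr := tr) (τ := τ) x y ∨
      Dstut (tr := tr) (τ := τ) y x) := by
  set R' : S → S → Prop := fun x y => SB tr τ x y ∨ Dstut (tr := tr) (τ := τ) x y ∨
      Dstut (tr := tr) (τ := τ) y x with hR'
  -- matching an x-move by the intermediate state y, for a D-pair (x,y)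
  have keyL : ∀ x y, Dstut (tr := tr) (τ := τ) x y →
      (∀ a x', tr x a x' → a ≠ τ →
        ∃ l y', TauSeq tr τ y l ∧ tr l a y' ∧ R' x l ∧ R' x' y') ∧
      (∀ x', tr x τ x' →
        (∃ l, TauSeq tr τ y l ∧ R' x l ∧ R' x' l) ∨
        ∃ l y', TauSeq tr τ y l ∧ tr l τ y' ∧ R' x l ∧ R' x' y') := by
    rintro x y ⟨t, u, hxt, hxu, hty, hyu⟩
    constructor
    · intro a x' hs ha
      obtain ⟨l, u', hseq, hstep, hr1, hr2⟩ := ((sbb_SB.2 x u hxu).1) a x' hs ha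
      exact ⟨l, u', hyu.trans hseq, hstep, Or.inl hr1, Or.inl hr2⟩
    · intro x' hs
      rcases (sbb_SB.2 x u hxu).2 x' hs with ⟨l, hseq, hr1, hr2⟩ | ⟨l, u', hseq, hstep, hr1, hr2⟩
      · -- u ⇒ l, SB x l, SB x' l; keep the stuttering pair at y itself
        refine Or.inl ⟨y, Relation.ReflTransGen.refl,
          Or.inr (Or.inl ⟨t, u, hxt, hxu, hty, hyu⟩), Or.inr (Or.inl ⟨t, u, ?_, ?_, hty, hyu⟩)⟩
        · exact SB_trans (SB_trans hr2 (SB_symm hr1)) hxt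
        · exact SB_trans (SB_trans hr2 (SB_symm hr1)) hxu
      · exact Or.inr ⟨l, u', hyu.trans hseq, hstep, Or.inl hr1, Or.inl hr2⟩
  -- matching a y-move (intermediate state) by x, for a D-pair (x,y)
  have keyR : ∀ x y, Dstut (tr := tr) (τ := τ) x y →
      (∀ a y', tr y a y' → a ≠ τ →
        ∃ l x', TauSeq tr τ x l ∧ tr l a x' ∧ R' y l ∧ R' y' x') ∧
      (∀ y', tr y τ y' →
        (∃ l, TauSeq tr τ x l ∧ R' y l ∧ R' y' l) ∨
        ∃ l x', TauSeq tr τ x l ∧ tr l τ x' ∧ R' y l ∧ R' y' x') := by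
    rintro x y ⟨t, u, hxt, hxu, hty, hyu⟩
    obtain ⟨σ, hxσ, hyσ⟩ := sbb_tauseq sbb_SB (SB_symm hxt) hty
    constructor
    · intro a y' hs ha
      obtain ⟨l, x', hseq, hstep, hr1, hr2⟩ := ((sbb_SB.2 y σ hyσ).1) a y' hs ha
      exact ⟨l, x', hxσ.trans hseq, hstep, Or.inl hr1, Or.inl hr2⟩
    · intro y' hs
      rcases (sbb_SB.2 y σ hyσ).2 y' hs with ⟨l, hseq, hr1, hr2⟩ | ⟨l, x', hseq, hstep, hr1, hr2⟩
      · exact Or.inl ⟨l, hxσ.trans hseq, Or.inl hr1, Or.inl hr2⟩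
      · exact Or.inr ⟨l, x', hxσ.trans hseq, hstep, Or.inl hr1, Or.inl hr2⟩
  constructor
  · rintro s0 t0 (h | h | h)
    · exact Or.inl (SB_symm h)
    · exact Or.inr (Or.inr h)
    · exact Or.inr (Or.inl h)
  · rintro s1 s2 (h | h | h)
    · constructor
      · intro a s1' hs ha
        obtain ⟨l, s2', h1, h2, h3, h4⟩ := ((sbb_SB.2 s1 s2 h).1) a s1' hs ha
        exact ⟨l, s2', h1, h2, Or.inl h3, Or.inl h4⟩
      · intro s1' hs
        rcases (sbb_SB.2 s1 s2 h).2 s1' hs with ⟨l, h1, h2, h3⟩ | ⟨l, s2', h1, h2, h3, h4⟩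
        · exact Or.inl ⟨l, h1, Or.inl h2, Or.inl h3⟩
        · exact Or.inr ⟨l, s2', h1, h2, Or.inl h3, Or.inl h4⟩
    · exact keyL s1 s2 h
    · exact keyR s2 s1 h

/-- The stuttering lemma for SB. -/
theorem SB_stutter {s t m u : S} (hst : SB tr τ s t) (hsu : SB tr τ s u)
    (htm : TauSeq tr τ t m) (hmu : TauSeq tr τ m u) : SB tr τ s m :=
  ⟨_, stutter_sbb, Or.inr (Or.inl ⟨t, u, hst, hsu, htm, hmu⟩)⟩

/-- SB is a branching bisimulation. -/
theorem SB_bb : IsBranchingBisim tr τ (SB tr τ) := by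
  refine ⟨fun s t h => SB_symm h, fun s1 s2 h => ⟨(sbb_SB.2 s1 s2 h).1, ?_⟩⟩
  intro s1' hs
  rcases (sbb_SB.2 s1 s2 h).2 s1' hs with ⟨l, hseq, hr1, hr2⟩ | h'
  · rcases Relation.ReflTransGen.cases_tail hseq with rfl | ⟨c, hc1, hc2⟩
    · exact Or.inl hr2
    · refine Or.inr ⟨c, l, hc1, hc2, ?_, hr2⟩
      exact SB_stutter h hr1 hc1 (Relation.ReflTransGen.single hc2)
  · exact Or.inr h'

theorem BBisim_eq_SB : BBisim tr τ = SB tr τ := by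
  funext s t
  apply propext
  constructor
  · rintro ⟨R, hR, h⟩; exact ⟨R, bb_to_sbb hR, h⟩
  · intro h; exact ⟨SB tr τ, SB_bb, h⟩

end Aux

/-- Branching bisimilarity is an equivalence relation on the states. -/
theorem stmt1 {S A : Type*} (tr : S → A → S → Prop) (τ : A) :
    Equivalence (BBisim tr τ) := by
  constructor
  · intro s
    refine ⟨fun x y => x = y, ⟨fun a b h => h.symm, ?_⟩, rfl⟩
    rintro s1 s2 rfl
    constructor
    · intro a s1' hs _
      exact ⟨s1, s1', Relation.ReflTransGen.refl, hs, rfl, rfl⟩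
    · intro s1' hs
      exact Or.inr ⟨s1, s1', Relation.ReflTransGen.refl, hs, rfl, rfl⟩
  · rintro s t ⟨R, hR, h⟩
    exact ⟨R, hR, hR.1 s t h⟩
  · intro s t u h1 h2
    rw [BBisim_eq_SB] at *
    exact SB_trans h1 h2
end

section
/- Composition of matching: if s1 ≈ s2 and s1 ⇒ --a--> s1' for a visible action a (a τ-sequence followed by an a-step), then there exists s2' with s2 ⇒ --a--> s2' and s1' ≈ s2'. -/
lemma bbisim_tau_step {S A : Type*} (tr : S → A → S → Prop) (τ : A)
    {s1 s2 s1' : S} (h : BBisim tr τ s1 s2) (hstep : tr s1 τ s1') :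
    ∃ v, TauSeq tr τ s2 v ∧ BBisim tr τ s1' v := by
  obtain ⟨R, hR, hr⟩ := h
  rcases (hR.2 s1 s2 hr).2 s1' hstep with h | ⟨l, s2', hseq, hstep', _, hr'⟩
  · exact ⟨s2, Relation.ReflTransGen.refl, R, hR, h⟩
  · exact ⟨s2', hseq.tail hstep', R, hR, hr'⟩

lemma bbisim_tau_seq {S A : Type*} (tr : S → A → S → Prop) (τ : A)
    {s1 s2 u : S} (h : BBisim tr τ s1 s2) (hseq : TauSeq tr τ s1 u) :
    ∃ v, TauSeq tr τ s2 v ∧ BBisim tr τ u v := by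
  induction hseq with
  | refl => exact ⟨s2, Relation.ReflTransGen.refl, h⟩
  | tail _ hstep ih =>
    obtain ⟨v, hsv, hb⟩ := ih
    obtain ⟨w, hvw, hb'⟩ := bbisim_tau_step tr τ hb hstep
    exact ⟨w, hsv.trans hvw, hb'⟩

/-- Composition of matching: if `s1 ≈ s2` and `s1 ⇒ --a--> s1'` for a visible
action `a`, then there is `s2'` with `s2 ⇒ --a--> s2'` and `s1' ≈ s2'`. -/
theorem stmt18 {S A : Type*} (tr : S → A → S → Prop) (τ : A)
    {s1 s2 u s1' : S} {a : A} (h : BBisim tr τ s1 s2)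
    (hseq : TauSeq tr τ s1 u) (hstep : tr u a s1') (hvis : a ≠ τ) :
    ∃ v s2', TauSeq tr τ s2 v ∧ tr v a s2' ∧ BBisim tr τ s1' s2' := by
  obtain ⟨v, hsv, R, hR, hr⟩ := bbisim_tau_seq tr τ h hseq
  obtain ⟨l, s2', hseq', hstep', _, hr'⟩ := (hR.2 u v hr).1 a s1' hstep hvis
  exact ⟨l, s2', hsv.trans hseq', hstep', R, hR, hr'⟩
end
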